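/- arXiv:1412.1926 — 2 statements merged into one kernel-verified Lean document; each statement's English description precedes it below -/
import Mathlib

section
/- Virtual leave-one-out formula: let n ≥ 2, let R be a symmetric positive definite n×n real matrix and y ∈ ℝ^n. For i ∈ {1,…,n}, let R_i be the (n−1)×(n−1) matrix obtained from R by deleting its i-th row and i-th column, let r_i ∈ ℝ^{n−1} be the i-th column of R with its i-th entry removed, and let y_{−i} ∈ ℝ^{n−1} be y with its i-th entry removed. Then for every i, y_i − r_iᵀ R_i^{-1} y_{−i} = (R^{-1} y)_i / (R^{-1})_{i,i}. Consequently, (1/n) Σ_{i=1}^n ( y_i − r_iᵀ R_i^{-1} y_{−i} )² = (1/n) yᵀ R^{-1} (diag(R^{-1}))^{-2} R^{-1} y, where diag(A) denotes A with all off-diagonal entries set to 0. -/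
/-!
Let `v` be row `i` of `R⁻¹`, so `vᵀ R = eᵢᵀ`. The equations of this identity at the columns
`k ≠ i` say `v₋ᵢᵀ Rᵢ = -vᵢ rᵢᵀ`, hence `v₋ᵢ = -vᵢ Rᵢ⁻¹ rᵢ` and
`(R⁻¹ y)ᵢ = vᵢ yᵢ + v₋ᵢ ⬝ y₋ᵢ = vᵢ (yᵢ - rᵢᵀ Rᵢ⁻¹ y₋ᵢ)`. Taking `y = R eᵢ` makes the left side `1`,
so `vᵢ = (R⁻¹)ᵢᵢ ≠ 0` and we may divide. The mean square identity then only rewrites the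
quadratic form `yᵀ R⁻¹ D R⁻¹ y`, with `D` diagonal, as `∑ Dᵢᵢ (R⁻¹ y)ᵢ²`.
-/

namespace Matrix

variable {K : Type*} {n : ℕ}

theorem inv_row_succAbove_eq_neg_smul_vecMul [CommRing K]
    {R : Matrix (Fin (n + 1)) (Fin (n + 1)) K} (hR : IsUnit R.det) (i : Fin (n + 1))
    (hRi : IsUnit (R.submatrix i.succAbove i.succAbove).det) :
    (fun j => R⁻¹ i (i.succAbove j)) =
      -R⁻¹ i i • ((fun j => R i (i.succAbove j)) ᵥ* (R.submatrix i.succAbove i.succAbove)⁻¹) := by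
  set A := R.submatrix i.succAbove i.succAbove
  have hrow : ∀ k, ∑ j, R⁻¹ i j * R j k = (1 : Matrix _ _ K) i k := fun k =>
    congrFun (congrFun (nonsing_inv_mul R hR) i) k
  have hA : (fun j => R⁻¹ i (i.succAbove j)) ᵥ* A = -R⁻¹ i i • fun j => R i (i.succAbove j) := by
    funext k
    have := hrow (i.succAbove k)
    rw [Fin.sum_univ_succAbove _ i, one_apply_ne (Fin.succAbove_ne i k).symm] at this
    simp only [vecMul, dotProduct, A, submatrix_apply, Pi.smul_apply, smul_eq_mul]
    linear_combination this
  rw [← smul_vecMul, ← hA, vecMul_vecMul, mul_nonsing_inv A hRi, vecMul_one]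

theorem inv_mulVec_apply_eq_mul_sub [CommRing K] {R : Matrix (Fin (n + 1)) (Fin (n + 1)) K}
    (hR : IsUnit R.det) (i : Fin (n + 1))
    (hRi : IsUnit (R.submatrix i.succAbove i.succAbove).det) (y : Fin (n + 1) → K) :
    (R⁻¹ *ᵥ y) i = R⁻¹ i i * (y i - (fun j => R i (i.succAbove j)) ⬝ᵥ
      ((R.submatrix i.succAbove i.succAbove)⁻¹ *ᵥ fun j => y (i.succAbove j))) := by
  calc (R⁻¹ *ᵥ y) i
      = R⁻¹ i i * y i + (fun j => R⁻¹ i (i.succAbove j)) ⬝ᵥ fun j => y (i.succAbove j) :=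
        Fin.sum_univ_succAbove _ i
    _ = _ := by
      rw [inv_row_succAbove_eq_neg_smul_vecMul hR i hRi, smul_dotProduct, ← dotProduct_mulVec,
        smul_eq_mul]
      ring

theorem inv_apply_self_ne_zero [CommRing K] [Nontrivial K]
    {R : Matrix (Fin (n + 1)) (Fin (n + 1)) K} (hR : IsUnit R.det) (i : Fin (n + 1))
    (hRi : IsUnit (R.submatrix i.succAbove i.succAbove).det) : R⁻¹ i i ≠ 0 := by
  intro h
  have hei := inv_mulVec_apply_eq_mul_sub hR i hRi (R *ᵥ Pi.single i 1)
  rw [mulVec_mulVec, nonsing_inv_mul R hR, one_mulVec, h, zero_mul] at hei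
  simp at hei

theorem sub_dotProduct_inv_mulVec_eq_div [Field K]
    {R : Matrix (Fin (n + 1)) (Fin (n + 1)) K} (hR : IsUnit R.det) (i : Fin (n + 1))
    (hRi : IsUnit (R.submatrix i.succAbove i.succAbove).det) (y : Fin (n + 1) → K) :
    y i - (fun j => R i (i.succAbove j)) ⬝ᵥ
        ((R.submatrix i.succAbove i.succAbove)⁻¹ *ᵥ fun j => y (i.succAbove j)) =
      (R⁻¹ *ᵥ y) i / R⁻¹ i i := by
  rw [inv_mulVec_apply_eq_mul_sub hR i hRi y,
    mul_div_cancel_left₀ _ (inv_apply_self_ne_zero hR i hRi)]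

theorem IsSymm.sub_dotProduct_inv_mulVec_eq_div [Field K]
    {R : Matrix (Fin (n + 1)) (Fin (n + 1)) K} (hsymm : R.IsSymm)
    (hR : IsUnit R.det) (i : Fin (n + 1))
    (hRi : IsUnit (R.submatrix i.succAbove i.succAbove).det) (y : Fin (n + 1) → K) :
    y i - (fun j => R (i.succAbove j) i) ⬝ᵥ
        ((R.submatrix i.succAbove i.succAbove)⁻¹ *ᵥ fun j => y (i.succAbove j)) =
      (R⁻¹ *ᵥ y) i / R⁻¹ i i := by
  simp only [hsymm.apply i]
  exact Matrix.sub_dotProduct_inv_mulVec_eq_div hR i hRi y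

theorem IsSymm.dotProduct_mulVec_mul_diagonal_mul [CommRing K] {ι : Type*} [Fintype ι]
    [DecidableEq ι] {M : Matrix ι ι K} (hM : M.IsSymm) (e : ι → K) (y : ι → K) :
    y ⬝ᵥ ((M * diagonal e * M) *ᵥ y) = ∑ i, e i * (M *ᵥ y) i ^ 2 := by
  have hyM : y ᵥ* M = M *ᵥ y := by rw [← vecMul_transpose, hM.eq]
  rw [← mulVec_mulVec, ← mulVec_mulVec, dotProduct_mulVec, hyM, dotProduct]
  simp only [mulVec_diagonal]
  exact Finset.sum_congr rfl fun i _ => by ring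

theorem inv_diagonal_sq [Field K] {ι : Type*} [Fintype ι] [DecidableEq ι] {d : ι → K}
    (hd : ∀ i, d i ≠ 0) : (diagonal d)⁻¹ ^ 2 = diagonal fun i => (d i)⁻¹ ^ 2 := by
  rw [inv_eq_right_inv (B := diagonal d⁻¹), sq, diagonal_mul_diagonal]
  · simp only [Pi.inv_apply, sq]
  · rw [diagonal_mul_diagonal, ← diagonal_one]
    exact congrArg diagonal (funext fun i => mul_inv_cancel₀ (hd i))

end Matrix

open Matrix

theorem virtual_loo_formula_general (n : ℕ)
    (R : Matrix (Fin (n + 1)) (Fin (n + 1)) ℝ) (hR : R.PosDef) (y : Fin (n + 1) → ℝ) :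
    (∀ i : Fin (n + 1),
      y i - (fun j => R (i.succAbove j) i) ⬝ᵥ
          ((R.submatrix i.succAbove i.succAbove)⁻¹ *ᵥ fun j => y (i.succAbove j))
        = (R⁻¹ *ᵥ y) i / R⁻¹ i i) ∧
    (1 / (n + 1) : ℝ) * ∑ i : Fin (n + 1),
        (y i - (fun j => R (i.succAbove j) i) ⬝ᵥ
          ((R.submatrix i.succAbove i.succAbove)⁻¹ *ᵥ fun j => y (i.succAbove j))) ^ 2
      = (1 / (n + 1) : ℝ) *
        (y ⬝ᵥ ((R⁻¹ * (Matrix.diagonal fun i => R⁻¹ i i)⁻¹ ^ 2 * R⁻¹) *ᵥ y)) := by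
  have hsymm : R.IsSymm := isHermitian_iff_isSymm.mp hR.1
  have hdet : IsUnit R.det := (isUnit_iff_isUnit_det R).mp hR.isUnit
  have hdet_sub (i : Fin (n + 1)) : IsUnit (R.submatrix i.succAbove i.succAbove).det :=
    (isUnit_iff_isUnit_det _).mp (hR.submatrix Fin.succAbove_right_injective).isUnit
  have loo (i : Fin (n + 1)) := hsymm.sub_dotProduct_inv_mulVec_eq_div hdet i (hdet_sub i) y
  refine ⟨loo, ?_⟩
  rw [inv_diagonal_sq fun i => inv_apply_self_ne_zero hdet i (hdet_sub i),
    hsymm.inv.dotProduct_mulVec_mul_diagonal_mul]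
  simp only [loo, div_pow, inv_pow, inv_mul_eq_div]

/-- **Virtual leave-one-out formula.** For a symmetric positive definite `n × n` matrix `R`
and `y ∈ ℝⁿ`, the leave-one-out residual `y i - r_iᵀ R_i⁻¹ y_{-i}` (where `R_i` is `R` with
row and column `i` deleted, `r_i` is the `i`-th column of `R` with entry `i` removed and
`y_{-i}` is `y` with entry `i` removed) equals `(R⁻¹ y)_i / (R⁻¹)_{i,i}`; consequently the
leave-one-out mean square error has the closed form
`(1/n) yᵀ R⁻¹ (diag(R⁻¹))⁻² R⁻¹ y`. -/
theorem virtual_loo_formula (n : ℕ) (hn : 2 ≤ n + 1)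
    (R : Matrix (Fin (n + 1)) (Fin (n + 1)) ℝ) (hR : R.PosDef) (y : Fin (n + 1) → ℝ) :
    (∀ i : Fin (n + 1),
      y i - (fun j => R (i.succAbove j) i) ⬝ᵥ
          ((R.submatrix i.succAbove i.succAbove)⁻¹ *ᵥ fun j => y (i.succAbove j))
        = (R⁻¹ *ᵥ y) i / R⁻¹ i i) ∧
    (1 / (n + 1) : ℝ) * ∑ i : Fin (n + 1),
        (y i - (fun j => R (i.succAbove j) i) ⬝ᵥ
          ((R.submatrix i.succAbove i.succAbove)⁻¹ *ᵥ fun j => y (i.succAbove j))) ^ 2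
      = (1 / (n + 1) : ℝ) *
        (y ⬝ᵥ ((R⁻¹ * (Matrix.diagonal fun i => R⁻¹ i i)⁻¹ ^ 2 * R⁻¹) *ᵥ y)) :=
  virtual_loo_formula_general n R hR y
end

section
/- There exists a finite constant C, depending only on d, such that for all a, b ∈ ℝ^d, ∫_{ℝ^d} [1/(1 + |a − c|^{d+1})] · [1/(1 + |b − c|^{d+1})] dc ≤ C / (1 + |a − b|^{d+1}). -/
/-!
Since `‖a - b‖ ≤ ‖a - c‖ + ‖b - c‖`, one of `‖a - c‖`, `‖b - c‖` is at least `‖a - b‖ / 2`, so the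
corresponding factor of the integrand is at most `2 ^ n / (1 + ‖a - b‖ ^ n)`. Bounding the other
factor by the sum of both and integrating gives the claim with
`C = 2 ^ (n + 1) * ∫ 1 / (1 + ‖x‖ ^ n)`, which is finite because `n` exceeds the dimension.
-/

open MeasureTheory Module

lemma one_add_pow_le_two_pow_mul (n : ℕ) {t : ℝ} (ht : 0 ≤ t) :
    (1 + t) ^ n ≤ 2 ^ n * (1 + t ^ n) := by
  calc (1 + t) ^ n ≤ 2 ^ (n - 1) * (1 ^ n + t ^ n) := add_pow_le zero_le_one ht n
    _ ≤ 2 ^ n * (1 + t ^ n) := by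
      rw [one_pow]
      gcongr
      · norm_num
      · omega

lemma one_div_one_add_pow_le_of_le_two_mul (n : ℕ) {s u : ℝ} (hu : 0 ≤ u) (h : u ≤ 2 * s) :
    1 / (1 + s ^ n) ≤ 2 ^ n * (1 / (1 + u ^ n)) := by
  have hs : 0 ≤ s := by linarith
  rw [mul_one_div, div_le_div_iff₀ (by positivity) (by positivity), one_mul]
  calc 1 + u ^ n ≤ 1 + (2 * s) ^ n := by gcongr
    _ ≤ 2 ^ n * (1 + s ^ n) := by
      rw [mul_pow, mul_one_add]
      linarith [one_le_pow₀ (M₀ := ℝ) (a := 2) (n := n) (by norm_num)]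

lemma one_div_one_add_pow_mul_le (n : ℕ) {s t u : ℝ} (hs : 0 ≤ s) (ht : 0 ≤ t) (hu : 0 ≤ u)
    (h : u ≤ s + t) :
    1 / (1 + s ^ n) * (1 / (1 + t ^ n)) ≤
      2 ^ n * (1 / (1 + u ^ n)) * (1 / (1 + s ^ n) + 1 / (1 + t ^ n)) := by
  wlog hts : t ≤ s generalizing s t
  · rw [mul_comm (1 / (1 + s ^ n)), add_comm (1 / (1 + s ^ n))]
    exact this ht hs (by linarith) (by linarith)
  gcongr
  · exact one_div_one_add_pow_le_of_le_two_mul n hu (by linarith)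
  · exact le_add_of_nonneg_left (by positivity)

section

variable {E : Type*} [NormedAddCommGroup E] [NormedSpace ℝ E] [FiniteDimensional ℝ E]
  [MeasurableSpace E] [BorelSpace E] (μ : Measure E) [μ.IsAddHaarMeasure]

lemma integrable_one_div_one_add_norm_pow {n : ℕ} (hn : finrank ℝ E < n) :
    Integrable (fun x : E => 1 / (1 + ‖x‖ ^ n)) μ := by
  have hcont : Continuous fun x : E => 1 / (1 + ‖x‖ ^ n) :=
    continuous_const.div (by fun_prop) fun x => by positivity
  refine ((integrable_one_add_norm (μ := μ) (r := n) (by exact_mod_cast hn)).const_mul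
    (2 ^ n)).mono' hcont.aestronglyMeasurable (.of_forall fun x => ?_)
  have hx := norm_nonneg x
  rw [Real.norm_of_nonneg (by positivity), Real.rpow_neg (by positivity), Real.rpow_natCast,
    ← div_eq_mul_inv, div_le_div_iff₀ (by positivity) (by positivity), one_mul]
  exact one_add_pow_le_two_pow_mul n hx

theorem integral_one_div_one_add_norm_pow_mul_le {n : ℕ} (hn : finrank ℝ E < n) (a b : E) :
    ∫ c, 1 / (1 + ‖a - c‖ ^ n) * (1 / (1 + ‖b - c‖ ^ n)) ∂μ ≤
      2 ^ n * (2 * ∫ x, 1 / (1 + ‖x‖ ^ n) ∂μ) * (1 / (1 + ‖a - b‖ ^ n)) := by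
  set f : E → ℝ := fun x => 1 / (1 + ‖x‖ ^ n)
  have hf := integrable_one_div_one_add_norm_pow μ hn
  have hfa : Integrable (fun c => f (a - c)) μ := hf.comp_sub_left a
  have hfb : Integrable (fun c => f (b - c)) μ := hf.comp_sub_left b
  calc ∫ c, f (a - c) * f (b - c) ∂μ
      ≤ ∫ c, 2 ^ n * f (a - b) * (f (a - c) + f (b - c)) ∂μ := by
        refine integral_mono_of_nonneg (.of_forall fun c => by positivity)
          ((hfa.add hfb).const_mul _) (.of_forall fun c => ?_)
        refine one_div_one_add_pow_mul_le n (norm_nonneg _) (norm_nonneg _) (norm_nonneg _) ?_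
        simpa using norm_sub_le (a - c) (b - c)
    _ = 2 ^ n * (2 * ∫ x, f x ∂μ) * f (a - b) := by
        rw [integral_const_mul, integral_add hfa hfb, integral_sub_left_eq_self f μ a,
          integral_sub_left_eq_self f μ b]
        ring

end

theorem convolution_polynomial_decay_bound_general (d : ℕ) :
    ∃ C : ℝ, ∀ a b : Fin d → ℝ,
      ∫ c : Fin d → ℝ,
          (1 / (1 + ‖a - c‖ ^ (d + 1))) * (1 / (1 + ‖b - c‖ ^ (d + 1)))
        ≤ C * (1 / (1 + ‖a - b‖ ^ (d + 1))) :=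
  ⟨_, integral_one_div_one_add_norm_pow_mul_le volume (by simp)⟩

/-- There is a constant `C`, depending only on `d`, such that for all `a, b ∈ ℝ^d`
(with the max-norm),
`∫_{ℝ^d} 1/(1 + |a−c|^{d+1}) ⋅ 1/(1 + |b−c|^{d+1}) dc ≤ C / (1 + |a−b|^{d+1})`. -/
theorem convolution_polynomial_decay_bound (d : ℕ) (hd : 0 < d) :
    ∃ C : ℝ, ∀ a b : Fin d → ℝ,
      ∫ c : Fin d → ℝ,
          (1 / (1 + ‖a - c‖ ^ (d + 1))) * (1 / (1 + ‖b - c‖ ^ (d + 1)))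
        ≤ C * (1 / (1 + ‖a - b‖ ^ (d + 1))) :=
  convolution_polynomial_decay_bound_general d
end
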